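/- Let s ≥ 1, k ≥ 1, k − s + 1 ≥ 0, n ≥ 2k + 1, and let G be a connected graph of order n with δ(G) ≥ k. If μ(Ḡ) ≤ √((k−s+2)(n−k−1)), then G is s-edge-connected, unless G ∈ EP_n or G ∈ EC_n. -/

import Mathlib

/-!
If `G` is not `s`-edge-connected, some vertex set `t` is left by `c < s` edges of `G`, hence by
`e = |t||tᶜ| - c` edges of `Ḡ`. The test vector equal to `√|tᶜ|` on `t` and `√|t|` on `tᶜ` gives
`e ≤ μ(Ḡ) √(|t||tᶜ|)`, while the minimum degree forces `|t| + c ≥ k + 1` and `|tᶜ| + c ≥ k + 1`.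
These are incompatible unless `s = k + 1` and one side is a single vertex `v` of degree `k`. Then
`μ(Ḡ) ≤ √(deg_Ḡ v)`, and a second test vector shows that the neighbours of `v` in `Ḡ` have no
other neighbours in `Ḡ`: `Ḡ` contains the star at `v` as a component, which is the `EC_n` shape
with `r = 0`.
-/

open Finset

/-- Spectral radius (largest eigenvalue) of the adjacency matrix of `G`. -/
noncomputable def specRad {V : Type*} [Fintype V] [DecidableEq V] (G : SimpleGraph V) : ℝ :=
  letI : DecidableRel G.Adj := Classical.decRel _
  sSup (spectrum ℝ (G.adjMatrix ℝ))

/-- Degree of a vertex, via `Set.ncard` (no decidability needed). -/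
noncomputable def deg {V : Type*} (G : SimpleGraph V) (v : V) : ℕ :=
  (G.neighborSet v).ncard

/-- One step of the `k`-closure: add one edge between nonadjacent vertices
with degree sum at least `k`. -/
def ClosureStep {V : Type*} (k : ℕ) (G H : SimpleGraph V) : Prop :=
  ∃ u v : V, u ≠ v ∧ ¬ G.Adj u v ∧ k ≤ deg G u + deg G v ∧
    H = G ⊔ SimpleGraph.fromEdgeSet {s(u, v)}

/-- No pair of nonadjacent vertices has degree sum at least `k`. -/
def IsKClosed {V : Type*} (k : ℕ) (H : SimpleGraph V) : Prop :=
  ∀ u v : V, u ≠ v → ¬ H.Adj u v → deg H u + deg H v < k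

/-- `H` is a `k`-closure of `G`. -/
def IsKClosure {V : Type*} (k : ℕ) (G H : SimpleGraph V) : Prop :=
  Relation.ReflTransGen (ClosureStep k) G H ∧ IsKClosed k H

/-- `G` is `s`-connected: more than `s` vertices, and deleting fewer than `s`
vertices leaves a connected graph. -/
def SConnected {V : Type*} [Fintype V] (s : ℕ) (G : SimpleGraph V) : Prop :=
  s < Fintype.card V ∧
    ∀ S : Finset V, S.card < s → (G.induce ((↑S : Set V)ᶜ)).Connected

/-- `G` is `s`-edge-connected: at least two vertices, and deleting fewer than
`s` edges leaves a connected graph. -/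
def SEdgeConnected {V : Type*} [Fintype V] (s : ℕ) (G : SimpleGraph V) : Prop :=
  2 ≤ Fintype.card V ∧
    ∀ F : Finset (Sym2 V), ↑F ⊆ G.edgeSet → F.card < s →
      (G.deleteEdges ↑F).Connected

/-- `G` is `β`-deficient: some matching leaves at most `β` vertices unmatched. -/
def BetaDeficient {V : Type*} [Fintype V] (β : ℕ) (G : SimpleGraph V) : Prop :=
  ∃ M : G.Subgraph, M.IsMatching ∧ Fintype.card V ≤ M.verts.ncard + β

/-- `G` is `s`-path-coverable: the vertices are covered by at most `s`
vertex-disjoint paths. -/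
def SPathCoverable {V : Type*} (s : ℕ) (G : SimpleGraph V) : Prop :=
  ∃ m : ℕ, m ≤ s ∧ ∃ (a b : Fin m → V) (p : ∀ i, G.Walk (a i) (b i)),
    (∀ i, (p i).IsPath) ∧
    (∀ i j, i ≠ j → ∀ x, x ∈ (p i).support → x ∉ (p j).support) ∧
    (∀ x : V, ∃ i, x ∈ (p i).support)

/-- `G` is `s`-Hamiltonian: deleting any at most `s` vertices leaves a
Hamiltonian graph. -/
def SHamiltonian {V : Type*} [Fintype V] [DecidableEq V] (s : ℕ) (G : SimpleGraph V) : Prop :=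
  ∀ X : Finset V, X.card ≤ s → (G.induce ((↑X : Set V)ᶜ)).IsHamiltonian

/-- `G` is `s`-edge-Hamiltonian: any collection of vertex-disjoint paths with
at most `s` edges altogether is contained in a Hamiltonian cycle. -/
def SEdgeHamiltonian {V : Type*} [Fintype V] [DecidableEq V] (s : ℕ) (G : SimpleGraph V) : Prop :=
  ∀ (m : ℕ) (a b : Fin m → V) (p : ∀ i, G.Walk (a i) (b i)),
    (∀ i, (p i).IsPath) →
    (∀ i j, i ≠ j → ∀ x, x ∈ (p i).support → x ∉ (p j).support) →
    (∑ i, (p i).length) ≤ s →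
    ∃ (c : V) (w : G.Walk c c), w.IsHamiltonianCycle ∧
      ∀ i, ∀ e ∈ (p i).edges, e ∈ w.edges

/-- `G` is semi-regular bipartite: all edges go between `X` and its complement,
vertices in `X` all have degree `dX`, vertices outside `X` all have degree `dY`. -/
def IsSemiregularBipartite {V : Type*} (G : SimpleGraph V) : Prop :=
  ∃ (X : Set V) (dX dY : ℕ),
    (∀ u v, G.Adj u v → (u ∈ X ↔ v ∉ X)) ∧
    (∀ u ∈ X, deg G u = dX) ∧
    (∀ u ∉ X, deg G u = dY)

/-- `G ∈ EP_n`: `G = Ḡ₁ ∨ G₂` with `G₁` an `r`-regular graph of order `n-k+r`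
and `G₂` a spanning subgraph of `K_{k-r}` (equivalently: outside a set `S` of
`k-r` vertices the induced graph is `(n-k-1)`-regular, and all pairs between
`S` and its complement are joined). -/
def MemEP {V : Type*} [Fintype V] (n k : ℕ) (G : SimpleGraph V) : Prop :=
  ∃ (r : ℕ) (S : Finset V), r ≤ k ∧ S.card = k - r ∧
    (∀ a ∉ S, ∀ b ∈ S, G.Adj a b) ∧
    (∀ a ∉ S, ((G.neighborSet a) \ (↑S : Set V)).ncard = n - k - 1)

/-- `G ∈ EC_n`: `G = Ḡ₁ ∨ G₂` where `G₁ = (X,Y)` is semi-regular bipartite of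
order `n-s+1+r`, with degrees `k-s+2` on `X` and `n-k-1` on `Y`, and `G₂` is an
arbitrary graph on `s-1-r ≥ 0` vertices. -/
def MemEC {V : Type*} [Fintype V] [DecidableEq V] (n k s : ℕ) (G : SimpleGraph V) : Prop :=
  ∃ (r : ℕ) (X Y S : Finset V) (G₁ : SimpleGraph V),
    Disjoint X Y ∧ Disjoint X S ∧ Disjoint Y S ∧ X ∪ Y ∪ S = Finset.univ ∧
    ((S.card : ℤ) = (s : ℤ) - 1 - r) ∧
    ((X.card : ℤ) + Y.card = (n : ℤ) - s + 1 + r) ∧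
    (∀ u v, G₁.Adj u v → (u ∈ X ∧ v ∈ Y) ∨ (u ∈ Y ∧ v ∈ X)) ∧
    (∀ u ∈ X, ((deg G₁ u : ℤ) = (k : ℤ) - s + 2)) ∧
    (∀ v ∈ Y, ((deg G₁ v : ℤ) = (n : ℤ) - k - 1)) ∧
    (∀ a, a ∈ X ∪ Y → ∀ b ∈ S, G.Adj a b) ∧
    (∀ a ∈ X ∪ Y, ∀ b ∈ X ∪ Y, (G.Adj a b ↔ a ≠ b ∧ ¬ G₁.Adj a b))

/-- `G ∈ ES_n`: `G = Ḡ₁ ∨ G₂` where `G₁ = (X,Y)` is semi-regular bipartite of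
order `n-s-1+r`, with degrees `k-s` on `X` and `n-k-1` on `Y`, and `G₂` is an
arbitrary graph on `s+1-r ≥ 0` vertices. -/
def MemES {V : Type*} [Fintype V] [DecidableEq V] (n k s : ℕ) (G : SimpleGraph V) : Prop :=
  ∃ (r : ℕ) (X Y S : Finset V) (G₁ : SimpleGraph V),
    Disjoint X Y ∧ Disjoint X S ∧ Disjoint Y S ∧ X ∪ Y ∪ S = Finset.univ ∧
    ((S.card : ℤ) = (s : ℤ) + 1 - r) ∧
    ((X.card : ℤ) + Y.card = (n : ℤ) - s - 1 + r) ∧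
    (∀ u v, G₁.Adj u v → (u ∈ X ∧ v ∈ Y) ∨ (u ∈ Y ∧ v ∈ X)) ∧
    (∀ u ∈ X, ((deg G₁ u : ℤ) = (k : ℤ) - s)) ∧
    (∀ v ∈ Y, ((deg G₁ v : ℤ) = (n : ℤ) - k - 1)) ∧
    (∀ a, a ∈ X ∪ Y → ∀ b ∈ S, G.Adj a b) ∧
    (∀ a ∈ X ∪ Y, ∀ b ∈ X ∪ Y, (G.Adj a b ↔ a ≠ b ∧ ¬ G₁.Adj a b))

/-- `G = K_{k+1} + K_{n-k-1}`: the disjoint union of a clique on `k+1` vertices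
and a clique on the remaining vertices. -/
def IsCliquePlusClique {V : Type*} [Fintype V] (k : ℕ) (G : SimpleGraph V) : Prop :=
  ∃ S : Finset V, S.card = k + 1 ∧
    (∀ a ∈ S, ∀ b ∈ S, a ≠ b → G.Adj a b) ∧
    (∀ a ∉ S, ∀ b ∉ S, a ≠ b → G.Adj a b) ∧
    (∀ a ∈ S, ∀ b ∉ S, ¬ G.Adj a b)

open Matrix
open scoped MatrixOrder

lemma Matrix.IsHermitian.dotProduct_mulVec_le {n : Type*} [Fintype n] [DecidableEq n]
    {A : Matrix n n ℝ} (hA : A.IsHermitian) {r : ℝ} (hr : ∀ μ ∈ spectrum ℝ A, μ ≤ r)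
    (x : n → ℝ) : x ⬝ᵥ (A *ᵥ x) ≤ r * (x ⬝ᵥ x) := by
  have := (le_algebraMap_of_spectrum_le hr hA).dotProduct_mulVec_nonneg x
  simp only [star_trivial, sub_mulVec, dotProduct_sub, Algebra.algebraMap_eq_smul_one,
    smul_mulVec, one_mulVec, dotProduct_smul, smul_eq_mul] at this
  linarith

namespace SimpleGraph

section Spectral

variable {V : Type*} [Fintype V] (G : SimpleGraph V) [DecidableRel G.Adj]

lemma dotProduct_adjMatrix_mulVec (x : V → ℝ) :
    x ⬝ᵥ (G.adjMatrix ℝ *ᵥ x) = ∑ p ∈ G.interedges univ univ, x p.1 * x p.2 := by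
  rw [interedges_def, sum_filter, sum_product]
  simp only [dotProduct, mulVec, adjMatrix_apply, mul_sum, boole_mul, mul_ite, mul_zero]

variable [DecidableEq V]

lemma specRad_eq_sSup_spectrum : specRad G = sSup (spectrum ℝ (G.adjMatrix ℝ)) := by
  unfold specRad
  congr!

lemma dotProduct_adjMatrix_mulVec_le (x : V → ℝ) :
    x ⬝ᵥ (G.adjMatrix ℝ *ᵥ x) ≤ specRad G * (x ⬝ᵥ x) :=
  (isHermitian_adjMatrix (R := ℝ) G).dotProduct_mulVec_le (fun μ hμ => by
    rw [specRad_eq_sSup_spectrum]; exact le_csSup (finite_spectrum _).bddAbove hμ) x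

lemma two_mul_sum_le_specRad_mul {x : V → ℝ} (hx : 0 ≤ x) {T : Finset (V × V)}
    (hT : ∀ p ∈ T, G.Adj p.1 p.2 ∧ p.swap ∉ T) :
    2 * ∑ p ∈ T, x p.1 * x p.2 ≤ specRad G * ∑ u, x u ^ 2 := by
  have hdisj : Disjoint T (T.image Prod.swap) := by
    refine Finset.disjoint_left.mpr fun p hp hp' => ?_
    obtain ⟨q, hq, rfl⟩ := mem_image.mp hp'
    exact (hT q hq).2 hp
  calc 2 * ∑ p ∈ T, x p.1 * x p.2 = ∑ p ∈ T ∪ T.image Prod.swap, x p.1 * x p.2 := by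
        rw [sum_union hdisj, sum_image (fun p _ q _ h => Prod.swap_injective h), two_mul]
        simp only [Prod.fst_swap, Prod.snd_swap, mul_comm]
    _ ≤ ∑ p ∈ G.interedges univ univ, x p.1 * x p.2 := by
        refine sum_le_sum_of_subset_of_nonneg ?_ fun p _ _ => mul_nonneg (hx _) (hx _)
        rw [union_subset_iff]
        simp only [subset_iff, mem_image, mem_interedges_iff, mem_univ, true_and]
        exact ⟨fun p hp => (hT p hp).1, by rintro _ ⟨p, hp, rfl⟩; exact (hT p hp).1.symm⟩
    _ ≤ specRad G * ∑ u, x u ^ 2 := by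
        simpa [dotProduct, sq] using (dotProduct_adjMatrix_mulVec G x).symm.trans_le
          (G.dotProduct_adjMatrix_mulVec_le x)

lemma card_interedges_compl_le_specRad_mul_sqrt {t : Finset V} (ht : t.Nonempty)
    (htc : tᶜ.Nonempty) : (#(G.interedges t tᶜ) : ℝ) ≤ specRad G * √(#t * #tᶜ) := by
  set P : ℝ := #t * #tᶜ
  have hP : 0 < P := by
    have := ht.card_pos
    have := htc.card_pos
    positivity
  let x : V → ℝ := fun u => if u ∈ t then √(#tᶜ : ℝ) else √(#t : ℝ)
  have hx : 0 ≤ x := fun u => by dsimp only [x]; split_ifs <;> positivity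
  have hT : ∀ p ∈ G.interedges t tᶜ, G.Adj p.1 p.2 ∧ p.swap ∉ G.interedges t tᶜ := by
    intro p hp
    rw [mem_interedges_iff] at hp
    rw [mem_interedges_iff]
    exact ⟨hp.2.2, fun h => mem_compl.mp h.2.1 hp.1⟩
  have hpair : ∀ p ∈ G.interedges t tᶜ, x p.1 * x p.2 = √P := by
    intro p hp
    rw [mem_interedges_iff] at hp
    simp only [x, P, if_pos hp.1, if_neg (mem_compl.mp hp.2.1),
      Real.sqrt_mul (Nat.cast_nonneg _), mul_comm]
  have hsq : ∑ u, x u ^ 2 = 2 * P := by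
    have hin : ∀ u ∈ t, x u ^ 2 = #tᶜ := fun u hu => by simp [x, hu]
    have hout : ∀ u ∈ tᶜ, x u ^ 2 = #t := fun u hu => by simp [x, mem_compl.mp hu]
    rw [← sum_add_sum_compl t, sum_congr rfl hin, sum_congr rfl hout]
    simp only [sum_const, nsmul_eq_mul, P]
    ring
  have key := G.two_mul_sum_le_specRad_mul hx hT
  rw [sum_congr rfl hpair, sum_const, nsmul_eq_mul, hsq] at key
  refine le_of_mul_le_mul_right ?_ (Real.sqrt_pos.mpr hP)
  rw [mul_assoc, Real.mul_self_sqrt hP.le]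
  linarith

lemma sq_card_interedges_compl_le {t : Finset V} (ht : t.Nonempty) (htc : tᶜ.Nonempty) {T : ℝ}
    (hT : 0 ≤ T) (hμ : specRad G ≤ √T) : (#(G.interedges t tᶜ) : ℝ) ^ 2 ≤ T * (#t * #tᶜ) := by
  have := (G.card_interedges_compl_le_specRad_mul_sqrt ht htc).trans
    (mul_le_mul_of_nonneg_right hμ (Real.sqrt_nonneg _))
  rw [← Real.sqrt_mul hT] at this
  exact (Real.le_sqrt (Nat.cast_nonneg _) (mul_nonneg hT (by positivity))).mp this

lemma eq_of_adj_of_adj_of_specRad_le_sqrt_degree {v z w : V}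
    (hμ : specRad G ≤ √(G.degree v)) (hvz : G.Adj v z) (hzw : G.Adj z w) : w = v := by
  by_contra hwv
  set X := G.neighborFinset v
  set d : ℝ := (G.degree v : ℝ)
  set r := √d
  have hzX : z ∈ X := (G.mem_neighborFinset v z).mpr hvz
  have hvX : v ∉ X := G.notMem_neighborFinset_self v
  have hzv : z ≠ v := hvz.ne'
  have hr : 0 < r := Real.sqrt_pos.mpr (Nat.cast_pos.mpr (card_pos.mpr ⟨z, hzX⟩))
  have hrr : r * r = d := Real.mul_self_sqrt (Nat.cast_nonneg _)
  -- On the star at `v` this vector has Rayleigh quotient exactly `r`; the edge `zw` raises the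
  -- numerator by `2 x w` but the denominator by at most `x w / r`.
  let x : V → ℝ := fun u => if u = v then r else if u ∈ X then 1 else if u = w then r⁻¹ else 0
  have hx : 0 ≤ x := fun u => by dsimp only [x]; split_ifs <;> positivity
  have hxX : ∀ u ∈ X, x u = 1 := fun u hu => by simp [x, hu, ne_of_mem_of_not_mem hu hvX]
  set T : Finset (V × V) := insert (z, w) ({v} ×ˢ X)
  have hzwT : (z, w) ∉ {v} ×ˢ X := by simp [hzv.symm]
  have hT : ∀ p ∈ T, G.Adj p.1 p.2 ∧ p.swap ∉ T := by
    intro p hp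
    simp only [T, mem_insert, mem_product, mem_singleton] at hp
    rcases hp with rfl | ⟨h1, h2⟩
    · simp [T, hzw, hzw.ne', Ne.symm hwv]
    · refine ⟨h1 ▸ (G.mem_neighborFinset v p.2).mp h2, ?_⟩
      simp [T, Prod.ext_iff, h1, Ne.symm hwv, hvX]
  have hsumT : ∑ p ∈ T, x p.1 * x p.2 = x w + d * r := by
    have hxv : x v = r := by simp [x]
    rw [sum_insert hzwT, sum_product, sum_singleton]
    dsimp only
    rw [hxX z hzX, hxv, ← mul_sum,
      sum_congr rfl hxX, sum_const, card_neighborFinset_eq_degree, nsmul_one]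
    ring
  have hsq : ∑ u, x u ^ 2 = 2 * d + (if w ∈ X then 0 else r⁻¹ ^ 2) := by
    have hX : ∑ u ∈ X, x u ^ 2 = d := by
      rw [sum_eq_card_nsmul fun u hu => by rw [hxX u hu, one_pow], card_neighborFinset_eq_degree,
        nsmul_one]
    have hsupp : ∀ u ∈ univ, u ∉ insert v (insert w X) → x u ^ 2 = 0 := by
      intro u _ hu
      simp only [mem_insert, not_or] at hu
      simp [x, hu.1, hu.2.1, hu.2.2]
    rw [← sum_subset (subset_univ _) hsupp, sum_insert (by simp [hvX, Ne.symm hwv])]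
    split_ifs with hwX
    · rw [insert_eq_of_mem hwX, hX]
      simp [x, ← hrr]
      ring
    · rw [sum_insert hwX, hX]
      simp [x, hwv, hwX, ← hrr]
      ring
  have key := (G.two_mul_sum_le_specRad_mul hx hT).trans
    (mul_le_mul_of_nonneg_right hμ (sum_nonneg fun u _ => sq_nonneg (x u)))
  rw [hsumT, hsq] at key
  by_cases hwX : w ∈ X
  · rw [if_pos hwX, hxX w hwX] at key
    nlinarith
  · have hxw : x w = r⁻¹ := by simp [x, hwv, hwX]
    rw [if_neg hwX, hxw] at key
    have hrinv : r * r⁻¹ ^ 2 = r⁻¹ := by field_simp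
    nlinarith [inv_pos.mpr hr]

end Spectral

lemma fromEdgeSet_incidenceSet_adj {V : Type*} {H : SimpleGraph V} {v a b : V} :
    (fromEdgeSet (H.incidenceSet v)).Adj a b ↔ (a = v ∧ H.Adj v b) ∨ (b = v ∧ H.Adj v a) := by
  simp only [fromEdgeSet_adj, incidenceSet, Set.mem_ofPred_eq, mem_edgeSet, Sym2.mem_iff]
  constructor
  · rintro ⟨⟨h, rfl | rfl⟩, -⟩
    exacts [Or.inl ⟨rfl, h⟩, Or.inr ⟨rfl, h.symm⟩]
  · rintro (⟨rfl, h⟩ | ⟨rfl, h⟩)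
    exacts [⟨⟨h, Or.inl rfl⟩, h.ne⟩, ⟨⟨h.symm, Or.inr rfl⟩, h.ne'⟩]

section Cuts

variable {V : Type*} [Fintype V] (G : SimpleGraph V) [DecidableRel G.Adj]

lemma deg_eq_degree (v : V) : deg G v = G.degree v := by
  rw [deg, degree, neighborFinset_def, ← Set.ncard_eq_toFinset_card']

variable [DecidableEq V]

lemma degree_add_one_le_card_add_card_interedges {t : Finset V} {a : V} (ha : a ∈ t) :
    G.degree a + 1 ≤ #t + #(G.interedges t tᶜ) := by
  have hin : #(G.neighborFinset a ∩ t) < #t :=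
    card_lt_card ⟨inter_subset_right, fun h =>
      G.notMem_neighborFinset_self a (mem_of_mem_inter_left (h ha))⟩
  have hout : #(G.neighborFinset a \ t) ≤ #(G.interedges t tᶜ) := by
    refine card_le_card_of_injOn (a, ·) (fun b hb => ?_) fun b _ b' _ h => congrArg Prod.snd h
    rw [mem_coe, mem_sdiff, mem_neighborFinset] at hb
    exact G.mk_mem_interedges_iff.mpr ⟨ha, mem_compl.mpr hb.2, hb.1⟩
  rw [← card_neighborFinset_eq_degree, ← card_inter_add_card_sdiff (G.neighborFinset a) t]
  omega

lemma degree_add_one_le_card_compl_add_card_interedges {t : Finset V} {a : V} (ha : a ∉ t) :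
    G.degree a + 1 ≤ #tᶜ + #(G.interedges t tᶜ) := by
  have hcomm : #(G.interedges tᶜ t) = #(G.interedges t tᶜ) :=
    have := G.symm
    Rel.card_interedges_comm _ _
  have := G.degree_add_one_le_card_add_card_interedges (mem_compl.mpr ha)
  rwa [compl_compl, hcomm] at this

lemma Connected.card_interedges_compl_pos {G : SimpleGraph V} [DecidableRel G.Adj]
    (hG : G.Connected) {t : Finset V} (ht : t.Nonempty) (htc : tᶜ.Nonempty) :
    0 < #(G.interedges t tᶜ) := by
  obtain ⟨u, hu⟩ := ht
  obtain ⟨w, hw⟩ := htc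
  obtain ⟨d, -, hd₁, hd₂⟩ :=
    (hG.preconnected u w).some.exists_boundary_dart (t : Set V) hu (mem_compl.mp hw)
  exact card_pos.mpr ⟨(d.fst, d.snd), G.mk_mem_interedges_iff.mpr ⟨hd₁, mem_compl.mpr hd₂, d.adj⟩⟩

lemma card_interedges_compl_le_card {t : Finset V} {F : Finset (Sym2 V)}
    (hF : ∀ a ∈ t, ∀ b ∉ t, G.Adj a b → s(a, b) ∈ F) : #(G.interedges t tᶜ) ≤ #F := by
  refine card_le_card_of_injOn (fun p => s(p.1, p.2)) (fun p hp => ?_) fun p hp q hq h => ?_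
  · rw [mem_coe, mem_interedges_iff, mem_compl] at hp
    exact hF _ hp.1 _ hp.2.1 hp.2.2
  · rw [mem_coe, mem_interedges_iff, mem_compl] at hp hq
    rcases Sym2.eq_iff.mp h with ⟨h₁, h₂⟩ | ⟨h₁, -⟩
    · exact Prod.ext h₁ h₂
    · exact absurd (h₁ ▸ hp.1) hq.2.1

lemma exists_cut_of_not_sEdgeConnected {s : ℕ} (hV : 2 ≤ Fintype.card V)
    (h : ¬ SEdgeConnected s G) :
    ∃ t : Finset V, t.Nonempty ∧ tᶜ.Nonempty ∧ #(G.interedges t tᶜ) < s := by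
  simp only [SEdgeConnected, hV, true_and, not_forall] at h
  obtain ⟨F, -, hFs, hF⟩ := h
  have : Nonempty V := Fintype.card_pos_iff.mp (by omega)
  obtain ⟨u, w, huw⟩ : ∃ u w, ¬ (G.deleteEdges F).Reachable u w := by
    by_contra! h
    exact hF ⟨h⟩
  let t := univ.filter ((G.deleteEdges F).Reachable u)
  refine ⟨t, ⟨u, by simp [t]⟩, ⟨w, by simp [t, huw]⟩,
    (G.card_interedges_compl_le_card fun a ha b hb hab => ?_).trans_lt hFs⟩
  by_contra hF'
  simp only [t, mem_filter, mem_univ, true_and] at ha hb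
  exact hb (ha.trans (deleteEdges_adj.mpr ⟨hab, hF'⟩).reachable)

lemma memEC_of_degree_eq_of_compl_adj_adj {k : ℕ} {v : V} (hv : G.degree v = k)
    (hstar : ∀ z w, Gᶜ.Adj v z → Gᶜ.Adj z w → w = v) :
    MemEC (Fintype.card V) k (k + 1) G := by
  set X := Gᶜ.neighborFinset v
  set G₁ := fromEdgeSet (Gᶜ.incidenceSet v)
  have hvX : v ∉ X := Gᶜ.notMem_neighborFinset_self v
  have hX : ∀ {a}, a ∈ X ↔ Gᶜ.Adj v a := Gᶜ.mem_neighborFinset v _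
  have hG₁ : ∀ {a b}, G₁.Adj a b ↔ (a = v ∧ b ∈ X) ∨ (b = v ∧ a ∈ X) := by
    intro a b
    rw [fromEdgeSet_incidenceSet_adj, hX, hX]
  have hXcard : #X + k + 1 = Fintype.card V := by
    rw [card_neighborFinset_eq_degree, degree_compl, hv]
    have := G.degree_lt_card_verts v
    omega
  have hXv : Disjoint X {v} := disjoint_singleton_right.mpr hvX
  refine ⟨0, X, {v}, (X ∪ {v})ᶜ, G₁, hXv, disjoint_compl_right.mono_left subset_union_left,
    disjoint_compl_right.mono_left subset_union_right, union_compl _, ?_, ?_, ?_, ?_, ?_, ?_, ?_⟩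
  · rw [card_compl, card_union_of_disjoint hXv, card_singleton]
    omega
  · rw [card_singleton]
    omega
  · intro a b hab
    rcases hG₁.mp hab with ⟨rfl, hb⟩ | ⟨rfl, ha⟩
    exacts [Or.inr ⟨mem_singleton_self _, hb⟩, Or.inl ⟨ha, mem_singleton_self _⟩]
  · intro u hu
    have : G₁.neighborSet u = {v} := by
      ext b
      simp [hG₁, hu, ne_of_mem_of_not_mem hu hvX]
    rw [deg, this, Set.ncard_singleton]
    push_cast
    ring
  · intro u hu
    rw [mem_singleton] at hu
    subst hu
    have : G₁.neighborSet u = X := by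
      ext b
      simp [hG₁, hvX]
    rw [deg, this, Set.ncard_coe_finset]
    omega
  · intro a ha b hb
    simp only [mem_compl, mem_union, mem_singleton, not_or] at ha hb
    by_contra hab
    have hc : Gᶜ.Adj a b := (G.compl_adj a b).mpr ⟨by rintro rfl; tauto, hab⟩
    rcases ha with ha | rfl
    · exact hb.2 (hstar a b (hX.mp ha) hc)
    · exact hb.1 (hX.mpr hc)
  · intro a ha b hb
    rw [mem_union, mem_singleton] at ha hb
    have hcompl : Gᶜ.Adj a b ↔ G₁.Adj a b := by
      rw [hG₁]
      constructor
      · intro h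
        rcases ha with ha | rfl
        · rcases hb with hb | rfl
          · exact absurd (hstar a b (hX.mp ha) h ▸ hb) hvX
          · exact Or.inr ⟨rfl, ha⟩
        · exact Or.inl ⟨rfl, hX.mpr h⟩
      · rintro (⟨rfl, hb⟩ | ⟨rfl, ha⟩)
        exacts [hX.mp hb, (hX.mp ha).symm]
    rw [← hcompl, compl_adj, not_and, not_not]
    exact ⟨fun h => ⟨h.ne, fun _ => h⟩, fun h => h.2 h.1⟩

end Cuts

end SimpleGraph

lemma eq_succ_and_side_eq_one_of_cut_bounds {n k s n₁ n₂ c e : ℕ} (hks : s ≤ k + 1)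
    (hn : 2 * k + 1 ≤ n) (hsum : n₁ + n₂ = n) (hc : 0 < c) (hcs : c < s)
    (hd₁ : k + 1 ≤ n₁ + c) (hd₂ : k + 1 ≤ n₂ + c) (hec : c + e = n₁ * n₂)
    (he : (e : ℝ) ^ 2 ≤ ((k : ℝ) - s + 2) * ((n : ℝ) - k - 1) * (n₁ * n₂)) :
    s = k + 1 ∧ (n₁ = 1 ∨ n₂ = 1) := by
  have he' : (e : ℤ) ^ 2 ≤ ((k : ℤ) - s + 2) * ((n : ℤ) - k - 1) * (n₁ * n₂) := by
    exact_mod_cast he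
  zify at hks hn hsum hc hcs hd₁ hd₂ hec
  set t : ℤ := ((k : ℤ) - s + 2) * ((n : ℤ) - k - 1)
  have ht : 0 ≤ t := mul_nonneg (by linarith) (by linarith)
  -- `e = n₁ n₂ - c ≥ t + c`, so `e² ≥ (t + c) e > t (e + c) = t n₁ n₂`.
  have hcut : ¬ t + 2 * c ≤ n₁ * n₂ := fun hP => by nlinarith
  by_contra h
  apply hcut
  by_cases hsk : s ≤ k
  · nlinarith [mul_nonneg (by linarith : (0 : ℤ) ≤ n₁ - (k + 1 - c))
        (by linarith : (0 : ℤ) ≤ n₂ - (k + 1 - c)),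
      mul_nonneg (by linarith : (0 : ℤ) ≤ n - k - 1) (by linarith : (0 : ℤ) ≤ s - 1 - c),
      mul_nonneg (by linarith : (0 : ℤ) ≤ c) (by linarith : (0 : ℤ) ≤ k - 1 - c)]
  · have hs : s = k + 1 := by omega
    have hn₁ : (2 : ℤ) ≤ n₁ := by omega
    have hn₂ : (2 : ℤ) ≤ n₂ := by omega
    have hcn : 2 * (c : ℤ) + 3 ≤ n + k := by omega
    simp only [t, hs]
    push_cast
    nlinarith [mul_nonneg (by linarith : (0 : ℤ) ≤ n₁ - 2) (by linarith : (0 : ℤ) ≤ n₂ - 2)]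

theorem stmt_9_general {V : Type*} [Fintype V] [DecidableEq V] (n k s : ℕ) (G : SimpleGraph V)
    (hk : 1 ≤ k) (hks : (0 : ℤ) ≤ (k : ℤ) - s + 1) (hn : 2 * k + 1 ≤ n)
    (hcard : Fintype.card V = n) (hconn : G.Connected) (hδ : ∀ v : V, k ≤ deg G v)
    (hμ : specRad Gᶜ ≤ Real.sqrt (((k : ℝ) - s + 2) * ((n : ℝ) - k - 1))) :
    SEdgeConnected s G ∨ MemEP n k G ∨ MemEC n k s G := by
  classical
  by_cases hsec : SEdgeConnected s G
  · exact Or.inl hsec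
  refine Or.inr (Or.inr ?_)
  obtain ⟨t, ht, htc, hcs⟩ := G.exists_cut_of_not_sEdgeConnected (by omega) hsec
  obtain ⟨a, ha⟩ := ht
  obtain ⟨b, hb⟩ := htc
  have hδ' : ∀ v, k ≤ G.degree v := fun v => G.deg_eq_degree v ▸ hδ v
  have hd₁ := G.degree_add_one_le_card_add_card_interedges ha
  have hd₂ := G.degree_add_one_le_card_compl_add_card_interedges (mem_compl.mp hb)
  have hT : 0 ≤ ((k : ℝ) - s + 2) * ((n : ℝ) - k - 1) := by
    have : (s : ℝ) ≤ k + 1 := by exact_mod_cast (by omega : s ≤ k + 1)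
    have : (2 * k + 1 : ℝ) ≤ n := by exact_mod_cast hn
    exact mul_nonneg (by linarith) (by linarith)
  obtain ⟨rfl, hside⟩ := eq_succ_and_side_eq_one_of_cut_bounds (by omega) hn
    (by rw [card_add_card_compl, hcard]) (hconn.card_interedges_compl_pos ⟨a, ha⟩ ⟨b, hb⟩) hcs
    ((Nat.succ_le_succ (hδ' a)).trans hd₁) ((Nat.succ_le_succ (hδ' b)).trans hd₂)
    (G.card_interedges_add_card_interedges_compl disjoint_compl_right)
    (Gᶜ.sq_card_interedges_compl_le ⟨a, ha⟩ ⟨b, hb⟩ hT hμ)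
  obtain ⟨v, hv⟩ : ∃ v, G.degree v = k := by
    rcases hside with h | h
    exacts [⟨a, by have := hδ' a; omega⟩, ⟨b, by have := hδ' b; omega⟩]
  subst hcard
  refine G.memEC_of_degree_eq_of_compl_adj_adj hv fun z w =>
    Gᶜ.eq_of_adj_of_adj_of_specRad_le_sqrt_degree (hμ.trans_eq ?_)
  rw [G.degree_compl, hv, Nat.cast_sub (by omega), Nat.cast_sub (by omega)]
  push_cast
  ring_nf

/-- Spectral condition of the complement for `s`-edge-connectivity. -/
theorem stmt_9 {V : Type*} [Fintype V] [DecidableEq V] (n k s : ℕ) (G : SimpleGraph V)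
    (hs : 1 ≤ s) (hk : 1 ≤ k) (hks : (0 : ℤ) ≤ (k : ℤ) - s + 1) (hn : 2 * k + 1 ≤ n)
    (hcard : Fintype.card V = n) (hconn : G.Connected) (hδ : ∀ v : V, k ≤ deg G v)
    (hμ : specRad Gᶜ ≤ Real.sqrt (((k : ℝ) - s + 2) * ((n : ℝ) - k - 1))) :
    SEdgeConnected s G ∨ MemEP n k G ∨ MemEC n k s G :=
  stmt_9_general n k s G hk hks hn hcard hconn hδ hμ
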